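/- arXiv:1804.02194 — 2 statements merged into one kernel-verified Lean document; each statement's English description precedes it below -/
import Mathlib

section
/- Let X be a Banach sequence space over a countably infinite index set I in which the canonical unit vectors (e_i)_{i∈I} form an OP-basis, let integers 1 ≤ r₁ < r₂ < ⋯ < r_N (N ≥ 2) be given, and for each 1 ≤ l ≤ N let T_l = T_{b^{(l)},φ_l} : X → X be a weighted pseudo-shift with weight sequence b^{(l)} = (b_i^{(l)})_{i∈I} of nonzero scalars and injective map φ_l : I → I. Assume that for all 1 ≤ s < l ≤ N the sequence ((φ_s^{r_s})^n)_n is run-away with ((φ_l^{r_l})^n)_n. Then the following are equivalent: (1) T₁^{r₁}, T₂^{r₂}, …, T_N^{r_N} are densely d-hypercyclic; (2) (α) each mapping φ_l has no periodic points, and (β) there exists a strictly increasing sequence (n_k)_{k≥1} of positive integers such that for every i ∈ I: (H1) for each 1 ≤ l ≤ N, ‖(∏_{v=0}^{r_l n_k−1} b^{(l)}_{φ_l^v(i)})^{−1} e_{φ_l^{r_l n_k}(i)}‖ → 0 and ‖(∏_{v=1}^{r_l n_k} b^{(l)}_{ψ_l^v(i)}) e_{ψ_l^{r_l n_k}(i)}‖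 → 0 as k → ∞; and (H2) for all 1 ≤ s < l ≤ N, ‖(∏_{v=0}^{r_s n_k−1} b^{(s)}_{φ_s^v(i)})^{−1} (∏_{v=1}^{r_l n_k} b^{(l)}_{ψ_l^v(φ_s^{r_s n_k}(i))}) e_{ψ_l^{r_l n_k}(φ_s^{r_s n_k}(i))}‖ → 0 and ‖(∏_{v=0}^{r_l n_k−1} b^{(l)}_{φ_l^v(i)})^{−1} (∏_{v=1}^{r_s n_k} b^{(s)}_{ψ_s^v(φ_l^{r_l n_k}(i))}) e_{ψ_s^{r_s n_k}(φ_l^{r_l n_k}(i))}‖ → 0 as k → ∞. -/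
open Filter Topology
open scoped Classical

/-- The vector `(∏_{v=1}^{n} b_{ψ^v(i)}) • e_{ψ^n(i)}`, where `ψ` is the partial inverse of the
injective map `φ`, with the convention that the whole term is `0` when `ψ^n(i)` is undefined
(i.e. when `i ∉ φ^n(I)`). -/
noncomputable def backVec {I X : Type*} [AddCommGroup X] [Module ℂ X]
    (φ : I → I) (b : I → ℂ) (e : I → X) (n : ℕ) (i : I) : X :=
  if h : ∃ j, φ^[n] j = i then
    (∏ v ∈ Finset.range n, b (φ^[v] (Classical.choose h))) • e (Classical.choose h)
  else 0

/-- `(φ₁^n)_n` is run-away with `(φ₂^n)_n`: for every finite subset `I₀` there is `n₀` such that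
`φ₁^n(I₀) ∩ φ₂^n(I₀) = ∅` for all `n ≥ n₀`. -/
def RunAwayWith {I : Type*} (φ₁ φ₂ : I → I) : Prop :=
  ∀ I₀ : Finset I, ∃ n₀ : ℕ, ∀ n ≥ n₀, ∀ i ∈ I₀, ∀ j ∈ I₀, φ₁^[n] i ≠ φ₂^[n] j

set_option linter.unusedSectionVars false
set_option linter.unusedVariables false
set_option maxHeartbeats 1000000

section Aux
variable {X : Type*} [NormedAddCommGroup X] [NormedSpace ℂ X] {I : Type*}
  (J : X →L[ℂ] (I → ℂ)) (b : I → ℂ) (φ : I → I) (T : X →L[ℂ] X)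

lemma coord_pow (hT : ∀ x i, J (T x) i = b i * J x (φ i)) :
    ∀ (m : ℕ) (x : X) (i : I),
      J ((T ^ m) x) i = (∏ v ∈ Finset.range m, b (φ^[v] i)) * J x (φ^[m] i) := by
  intro m
  induction m with
  | zero => intro x i; simp
  | succ m ih =>
    intro x i
    rw [pow_succ, ContinuousLinearMap.mul_apply, ih, hT, Finset.prod_range_succ,
      Function.iterate_succ_apply', mul_assoc]

lemma pow_e (hJ : Function.Injective J) (hφ : Function.Injective φ)
    (hT : ∀ x i, J (T x) i = b i * J x (φ i)) (e : I → X)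
    (he : ∀ i j : I, J (e i) j = if j = i then 1 else 0) (m : ℕ) (i : I) :
    (T ^ m) (e i) = backVec φ b e m i := by
  apply hJ
  funext j
  rw [coord_pow J b φ T hT, he]
  unfold backVec
  by_cases h : ∃ c, φ^[m] c = i
  · rw [dif_pos h]
    have hc := Classical.choose_spec h
    set c := Classical.choose h with hcdef
    rw [map_smul]
    simp only [Pi.smul_apply, he, smul_eq_mul]
    by_cases hj : j = c
    · subst hj
      rw [if_pos hc, if_pos rfl]
    · have : φ^[m] j ≠ i := fun hh => hj ((hφ.iterate m) (hh.trans hc.symm))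
      rw [if_neg this, if_neg hj, mul_zero, mul_zero]
  · rw [dif_neg h, map_zero]
    have : φ^[m] j ≠ i := fun hh => h ⟨j, hh⟩
    simp [this]

lemma pow_inv_e (hJ : Function.Injective J) (hφ : Function.Injective φ)
    (hb : ∀ i, b i ≠ 0)
    (hT : ∀ x i, J (T x) i = b i * J x (φ i)) (e : I → X)
    (he : ∀ i j : I, J (e i) j = if j = i then 1 else 0) (m : ℕ) (i : I) :
    (T ^ m) ((∏ v ∈ Finset.range m, b (φ^[v] i))⁻¹ • e (φ^[m] i)) = e i := by
  apply hJ
  funext j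
  rw [coord_pow J b φ T hT, map_smul]
  simp only [Pi.smul_apply, he, smul_eq_mul]
  by_cases hj : j = i
  · subst hj
    rw [if_pos rfl, if_pos rfl, mul_one]
    field_simp
    exact div_self (Finset.prod_ne_zero_iff.mpr fun v _ => hb _)
  · have : φ^[m] j ≠ φ^[m] i := fun hh => hj ((hφ.iterate m) hh)
    rw [if_neg this, if_neg hj, mul_zero, mul_zero]

end Aux

section MainLemmas
variable {X : Type*} [NormedAddCommGroup X] [NormedSpace ℂ X] {I : Type*}

lemma no_periodic
    (J : X →L[ℂ] (I → ℂ))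
    (e : I → X) (he : ∀ i j : I, J (e i) j = if j = i then 1 else 0)
    {N : ℕ}
    (r : Fin N → ℕ)
    (b : Fin N → I → ℂ)
    (φ : Fin N → I → I)
    (T : Fin N → X →L[ℂ] X)
    (hT : ∀ (l : Fin N) (x : X) (i : I), J (T l x) i = b l i * J x (φ l i))
    (hDense : Dense {x : X |
      Dense (Set.range fun n : ℕ => fun l : Fin N => ((T l) ^ (r l * n)) x)})
    (l : Fin N) (i : I) (M : ℕ) (hM : 1 ≤ M) : (φ l)^[M] i ≠ i := by
  intro hMi
  obtain ⟨x, hx⟩ := hDense.nonempty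
  simp only [Set.mem_setOf_eq] at hx
  set g : (Fin N → X) → ℂ := fun y => J (y l) i with hg
  have hgc : Continuous g := by
    exact (continuous_apply i).comp (J.continuous.comp (continuous_apply l))
  have hsurj : Function.Surjective g := by
    intro c
    refine ⟨fun _ => c • e i, ?_⟩
    simp [hg, he]
  have hvals : Dense (Set.range fun nn : ℕ => J (((T l) ^ (r l * nn)) x) i) := by
    have h1 : (Set.range fun nn : ℕ => J (((T l) ^ (r l * nn)) x) i) =
        g '' (Set.range fun nn : ℕ => fun l' : Fin N => ((T l') ^ (r l' * nn)) x) := by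
      rw [← Set.range_comp]; rfl
    rw [h1, dense_iff_closure_eq]
    apply Set.eq_univ_of_univ_subset
    calc Set.univ = g '' Set.univ := by rw [Set.image_univ, hsurj.range_eq]
      _ = g '' closure (Set.range fun nn : ℕ => fun l' : Fin N => ((T l') ^ (r l' * nn)) x) := by
          rw [hx.closure_eq]
      _ ⊆ _ := image_closure_subset_closure_image hgc
  set w : ℕ → ℂ := fun v => b l ((φ l)^[v] i) with hwdef
  have hiter : ∀ v, (φ l)^[v + M] i = (φ l)^[v] i := by
    intro v; rw [Function.iterate_add_apply, hMi]
  have hwper : ∀ v, w (v + M) = w v := by intro v; simp only [hwdef]; rw [hiter]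
  set P : ℂ := ∏ v ∈ Finset.range M, w v with hP
  have hprod : ∀ q s : ℕ, ∏ v ∈ Finset.range (M * q + s), w v
      = P ^ q * ∏ v ∈ Finset.range s, w v := by
    intro q
    induction q with
    | zero => intro s; simp
    | succ q ih =>
      intro s
      have hnum : M * (q + 1) + s = M + (M * q + s) := by ring
      rw [hnum, Finset.prod_range_add, pow_succ]
      have h2 : ∏ x ∈ Finset.range (M * q + s), w (M + x)
          = ∏ x ∈ Finset.range (M * q + s), w x :=
        Finset.prod_congr rfl fun x _ => by rw [add_comm M x, hwper]
      rw [h2, ih s]; ring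
  have hiter2 : ∀ q s : ℕ, (φ l)^[M * q + s] i = (φ l)^[s] i := by
    intro q
    induction q with
    | zero => intro s; simp
    | succ q ih =>
      intro s
      have hnum : M * (q + 1) + s = (M * q + s) + M := by ring
      rw [hnum, Function.iterate_add_apply, hMi, ih s]
  set dd : ℕ → ℂ := fun s => (∏ v ∈ Finset.range s, w v) * J x ((φ l)^[s] i) with hdd
  have hval : ∀ nn : ℕ, J (((T l) ^ (r l * nn)) x) i
      = P ^ ((r l * nn) / M) * dd ((r l * nn) % M) := by
    intro nn
    rw [coord_pow J (b l) (φ l) (T l) (hT l) (r l * nn) x i]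
    conv_lhs => rw [show r l * nn = M * ((r l * nn) / M) + (r l * nn) % M
      from (Nat.div_add_mod _ _).symm]
    rw [hprod, hiter2]
    simp only [hdd]; ring
  have hballs := Metric.dense_iff.mp hvals
  have hMpos : 0 < M := hM
  have hMne : (Finset.range M).Nonempty := ⟨0, Finset.mem_range.mpr hM⟩
  set Dm : ℝ := (Finset.range M).sup' hMne fun s => ‖dd s‖ with hDm
  have hDm0 : 0 ≤ Dm :=
    le_trans (norm_nonneg (dd 0)) (Finset.le_sup' (fun s => ‖dd s‖) (Finset.mem_range.mpr hM))
  have hdle : ∀ nn : ℕ, ‖dd ((r l * nn) % M)‖ ≤ Dm := fun nn =>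
    Finset.le_sup' (fun s => ‖dd s‖) (Finset.mem_range.mpr (Nat.mod_lt _ hMpos))
  by_cases hPle : ‖P‖ ≤ 1
  · obtain ⟨v, hvball, nn, hvnn⟩ := hballs ((Dm + 2 : ℝ) : ℂ) 1 one_pos
    have hvnn' : J (((T l) ^ (r l * nn)) x) i = v := hvnn
    have hvb : ‖v‖ ≤ Dm := by
      rw [← hvnn', hval, norm_mul, norm_pow]
      have h3 : ‖P‖ ^ ((r l * nn) / M) ≤ 1 := pow_le_one₀ (norm_nonneg _) hPle
      nlinarith [hdle nn, norm_nonneg (dd ((r l * nn) % M)),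
        pow_nonneg (norm_nonneg P) ((r l * nn) / M)]
    have hzn : ‖((Dm + 2 : ℝ) : ℂ)‖ = Dm + 2 := by
      rw [Complex.norm_real]; exact abs_of_nonneg (by linarith)
    have hd1 : ‖((Dm + 2 : ℝ) : ℂ) - v‖ < 1 := by
      have h4 := Metric.mem_ball.mp hvball
      rw [dist_eq_norm] at h4
      calc ‖((Dm + 2 : ℝ) : ℂ) - v‖ = ‖v - ((Dm + 2 : ℝ) : ℂ)‖ := norm_sub_rev _ _
        _ < 1 := h4
    have := norm_sub_norm_le ((Dm + 2 : ℝ) : ℂ) v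
    rw [hzn] at this
    linarith
  · push_neg at hPle
    set Z := (Finset.range M).filter fun s => dd s ≠ 0 with hZ
    by_cases hZne : Z.Nonempty
    · set m₀ : ℝ := Z.inf' hZne fun s => ‖dd s‖ with hm₀
      have hm₀pos : 0 < m₀ := (Finset.lt_inf'_iff _).mpr fun s hs =>
        norm_pos_iff.mpr (Finset.mem_filter.mp hs).2
      obtain ⟨v, hvball, nn, hvnn⟩ := hballs ((m₀ / 2 : ℝ) : ℂ) (m₀ / 4) (by positivity)
      have hvnn' : J (((T l) ^ (r l * nn)) x) i = v := hvnn
      have hcases : v = 0 ∨ m₀ ≤ ‖v‖ := by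
        rw [← hvnn', hval]
        by_cases h0 : dd ((r l * nn) % M) = 0
        · left; rw [h0, mul_zero]
        · right
          have hmem : (r l * nn) % M ∈ Z :=
            Finset.mem_filter.mpr ⟨Finset.mem_range.mpr (Nat.mod_lt _ hMpos), h0⟩
          have h1 : m₀ ≤ ‖dd ((r l * nn) % M)‖ := Finset.inf'_le (fun s => ‖dd s‖) hmem
          rw [norm_mul, norm_pow]
          have h2 : 1 ≤ ‖P‖ ^ ((r l * nn) / M) := one_le_pow₀ hPle.le
          nlinarith
      have hzn : ‖((m₀ / 2 : ℝ) : ℂ)‖ = m₀ / 2 := by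
        rw [Complex.norm_real]; exact abs_of_nonneg (by linarith)
      have hdist : ‖v - ((m₀ / 2 : ℝ) : ℂ)‖ < m₀ / 4 := by
        rw [← dist_eq_norm]; exact Metric.mem_ball.mp hvball
      rcases hcases with h | h
      · rw [h, zero_sub, norm_neg, hzn] at hdist; linarith
      · have := norm_sub_norm_le v ((m₀ / 2 : ℝ) : ℂ)
        rw [hzn] at this; linarith
    · obtain ⟨v, hvball, nn, hvnn⟩ := hballs 1 (1 / 2) (by norm_num)
      have hvnn' : J (((T l) ^ (r l * nn)) x) i = v := hvnn
      have h0 : dd ((r l * nn) % M) = 0 := by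
        by_contra h0
        exact hZne ⟨_, Finset.mem_filter.mpr ⟨Finset.mem_range.mpr (Nat.mod_lt _ hMpos), h0⟩⟩
      have hv0 : v = 0 := by rw [← hvnn', hval, h0, mul_zero]
      rw [hv0, Metric.mem_ball, dist_eq_norm, zero_sub, norm_neg, norm_one] at hvball
      norm_num at hvball


lemma exists_good
    (hnt : Nontrivial X)
    (J : X →L[ℂ] (I → ℂ))
    (e : I → X) (he : ∀ i j : I, J (e i) j = if j = i then 1 else 0)
    (f : I → X →L[ℂ] ℂ) (hf : ∀ (i : I) (x : X), f i x = J x i)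
    (C : ℝ) (hC1 : 1 ≤ C) (hCop : ∀ i : I, ‖e i‖ * ‖f i‖ ≤ C)
    {N : ℕ} (hN : 2 ≤ N)
    (r : Fin N → ℕ) (hr1 : ∀ l, 1 ≤ r l)
    (b : Fin N → I → ℂ) (hb : ∀ l i, b l i ≠ 0)
    (φ : Fin N → I → I)
    (T : Fin N → X →L[ℂ] X)
    (hT : ∀ (l : Fin N) (x : X) (i : I), J (T l x) i = b l i * J x (φ l i))
    (hrun : ∀ s l : Fin N, s < l → RunAwayWith ((φ s)^[r s]) ((φ l)^[r l]))
    (hDense : Dense {x : X |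
      Dense (Set.range fun n : ℕ => fun l : Fin N => ((T l) ^ (r l * n)) x)})
    (hper : ∀ l : Fin N, ∀ i : I, ∀ M : ℕ, 1 ≤ M → (φ l)^[M] i ≠ i)
    (F : Finset I) (ε : ℝ) (hε : 0 < ε) (n₀ : ℕ) :
    ∃ nn, n₀ ≤ nn ∧ 1 ≤ nn ∧ ∀ i ∈ F,
      (∀ l : Fin N,
        ‖(∏ v ∈ Finset.range (r l * nn), b l ((φ l)^[v] i))⁻¹ •
            e ((φ l)^[r l * nn] i)‖ < ε ∧
        ‖backVec (φ l) (b l) e (r l * nn) i‖ < ε) ∧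
      (∀ s l : Fin N, s < l →
        ‖(∏ v ∈ Finset.range (r s * nn), b s ((φ s)^[v] i))⁻¹ •
            backVec (φ l) (b l) e (r l * nn) ((φ s)^[r s * nn] i)‖ < ε ∧
        ‖(∏ v ∈ Finset.range (r l * nn), b l ((φ l)^[v] i))⁻¹ •
            backVec (φ s) (b s) e (r s * nn) ((φ l)^[r l * nn] i)‖ < ε) := by
  haveI := hnt
  -- core inequality
  have hcore : ∀ (A B t : ℂ) (c : ℝ), (1:ℝ)/2 ≤ ‖A * t‖ → ‖B * t‖ ≤ c →
      ‖A⁻¹ * B‖ ≤ 2 * c := by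
    intro A B t c h1 h2
    have hAt : A * t ≠ 0 := by
      intro h; rw [h, norm_zero] at h1; linarith
    have hA : A ≠ 0 := fun h => hAt (by rw [h, zero_mul])
    have key : A⁻¹ * B * (A * t) = B * t := by field_simp
    calc ‖A⁻¹ * B‖ ≤ ‖A⁻¹ * B‖ * (2 * ‖A * t‖) := by nlinarith [norm_nonneg (A⁻¹ * B)]
      _ = 2 * (‖A⁻¹ * B‖ * ‖A * t‖) := by ring
      _ = 2 * ‖A⁻¹ * B * (A * t)‖ := by rw [norm_mul (A⁻¹ * B) (A * t)]
      _ = 2 * ‖B * t‖ := by rw [key]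
      _ ≤ 2 * c := by linarith
  set M : ℝ := ∑ i ∈ F, ‖f i‖ with hMdef
  have hM0 : 0 ≤ M := Finset.sum_nonneg fun i _ => norm_nonneg _
  have hMF : ∀ i ∈ F, ‖f i‖ ≤ M := fun i hi =>
    Finset.single_le_sum (fun j _ => norm_nonneg (f j)) hi
  have hC0 : (0:ℝ) < C := lt_of_lt_of_le one_pos hC1
  set δ : ℝ := min (1/(2*(M+1))) (ε/(4*C)) with hδdef
  have hδpos : 0 < δ := lt_min (by positivity) (by positivity)
  have hδ1 : M * δ ≤ 1/2 := by
    have h1 : δ ≤ 1/(2*(M+1)) := min_le_left _ _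
    have h2 : M * δ ≤ M * (1/(2*(M+1))) := mul_le_mul_of_nonneg_left h1 hM0
    have h3 : M * (1/(2*(M+1))) ≤ 1/2 := by
      rw [mul_one_div, div_le_div_iff₀ (by positivity) (by norm_num)]
      nlinarith
    linarith
  have hδ2 : 2 * δ * C < ε := by
    have h1 : δ ≤ ε/(4*C) := min_le_right _ _
    have h2 : 2 * δ * C ≤ 2 * (ε/(4*C)) * C := by nlinarith
    have h3 : 2 * (ε/(4*C)) * C = ε/2 := by field_simp; ring
    linarith
  set η : X := ∑ i ∈ F, e i with hηdef
  have hJη : ∀ j, J η j = if j ∈ F then 1 else 0 := by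
    intro j
    have h1 : J η = ∑ i ∈ F, J (e i) := map_sum J _ F
    rw [h1, Finset.sum_apply]
    simp only [he]
    exact Finset.sum_ite_eq F j fun _ => 1
  have hcd : ∀ (z z' : X) (j : I), ‖J z j - J z' j‖ ≤ ‖f j‖ * ‖z - z'‖ := by
    intro z z' j
    have h1 : J z j - J z' j = f j (z - z') := by rw [map_sub]; simp [hf]
    rw [h1]
    exact (f j).le_opNorm _
  -- avoidance
  have hsub : ∀ (l : Fin N) (i j : I) (n1 n2 : ℕ), n1 < n2 →
      (φ l)^[r l * n1] i = j → (φ l)^[r l * n2] i = j → False := by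
    intro l i j n1 n2 h h1 h2
    have hM1 : 1 ≤ r l * (n2 - n1) := Nat.mul_pos (hr1 l) (by omega)
    have he2 : r l * n2 = r l * (n2 - n1) + r l * n1 := by
      rw [← Nat.mul_add]; congr 1; omega
    rw [he2, Function.iterate_add_apply, h1] at h2
    exact hper l j (r l * (n2 - n1)) hM1 h2
  have havoid : ∀ (l : Fin N) (i j : I), ∀ᶠ nn in atTop, (φ l)^[r l * nn] i ≠ j := by
    intro l i j
    by_contra hcon
    rw [Filter.not_eventually] at hcon
    obtain ⟨n1, _, h1⟩ := (frequently_atTop.mp hcon) 0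
    obtain ⟨n2, hn2, h2⟩ := (frequently_atTop.mp hcon) (n1+1)
    exact hsub l i j n1 n2 (by omega) (not_not.mp h1) (not_not.mp h2)
  have hrun' : ∀ s l : Fin N, s < l → ∀ᶠ nn in atTop, ∀ i ∈ F, ∀ j ∈ F,
      (φ s)^[r s * nn] i ≠ (φ l)^[r l * nn] j := by
    intro s l hsl
    obtain ⟨n₁, hn₁⟩ := hrun s l hsl F
    rw [eventually_atTop]
    refine ⟨n₁, fun nn hnn i hi j hj => ?_⟩
    have h1 := hn₁ nn hnn i hi j hj
    rwa [← Function.iterate_mul, ← Function.iterate_mul] at h1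
  have hav1 : ∀ᶠ nn in atTop, ∀ l : Fin N, ∀ i ∈ F, ∀ j ∈ F,
      (φ l)^[r l * nn] i ≠ j :=
    eventually_all.mpr fun l => (eventually_all_finset F).mpr fun i _ =>
      (eventually_all_finset F).mpr fun j _ => havoid l i j
  have hav2 : ∀ᶠ nn in atTop, ∀ s l : Fin N, s < l → ∀ i ∈ F, ∀ j ∈ F,
      (φ s)^[r s * nn] i ≠ (φ l)^[r l * nn] j := by
    refine eventually_all.mpr fun s => eventually_all.mpr fun l => ?_
    by_cases hsl : s < l
    · exact (hrun' s l hsl).mono fun nn h _ => h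
    · exact Filter.Eventually.of_forall fun nn h => absurd h hsl
  obtain ⟨N₂, hN₂⟩ := eventually_atTop.mp
    ((hav1.and hav2).and (eventually_ge_atTop (max n₀ 1)))
  -- pick a d-hypercyclic vector close to η
  obtain ⟨x, hxA, hxball⟩ := hDense.exists_mem_open Metric.isOpen_ball
    ⟨η, Metric.mem_ball_self hδpos⟩
  simp only [Set.mem_setOf_eq] at hxA
  have hxd : ‖x - η‖ < δ := by rwa [mem_ball_iff_norm] at hxball
  haveI : Nonempty (Fin N) := ⟨⟨0, by omega⟩⟩
  haveI : Nontrivial (Fin N → X) := Function.nontrivial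
  haveI : ∀ y : Fin N → X, (nhdsWithin y {y}ᶜ).NeBot :=
    fun y => Module.punctured_nhds_neBot ℂ _ y
  set orb : ℕ → (Fin N → X) := fun nn => fun l => ((T l) ^ (r l * nn)) x with horbdef
  have hxA' : Dense (Set.range orb \ orb '' (Set.Iio N₂)) :=
    hxA.diff_finite ((Set.finite_Iio N₂).image orb)
  obtain ⟨y, ⟨⟨nn, hynn⟩, hnotin⟩, hyb⟩ := hxA'.exists_mem_open Metric.isOpen_ball
    ⟨(fun _ => η), Metric.mem_ball_self hδpos⟩
  have hnn2 : N₂ ≤ nn := by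
    by_contra hcon
    exact hnotin ⟨nn, Set.mem_Iio.mpr (by omega), hynn⟩
  have hball2 : dist (orb nn) (fun _ => η) < δ := by
    rw [hynn]; exact Metric.mem_ball.mp hyb
  have horb : ∀ l : Fin N, ‖((T l) ^ (r l * nn)) x - η‖ < δ := by
    intro l
    have h1 := (dist_pi_lt_iff hδpos).mp hball2 l
    rwa [dist_eq_norm] at h1
  obtain ⟨⟨hcond1, hcond2⟩, hge⟩ := hN₂ nn hnn2
  refine ⟨nn, le_trans (le_max_left _ _) hge, le_trans (le_max_right _ _) hge, ?_⟩
  intro i hi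
  set a : Fin N → I → ℂ := fun l j => ∏ v ∈ Finset.range (r l * nn), b l ((φ l)^[v] j)
    with hadef
  have hOrbF : ∀ l : Fin N, ‖a l i * J x ((φ l)^[r l * nn] i) - 1‖ ≤ M * δ := by
    intro l
    have h1 := hcd (((T l) ^ (r l * nn)) x) η i
    rw [coord_pow J (b l) (φ l) (T l) (hT l) _ x i, hJη, if_pos hi] at h1
    calc ‖a l i * J x ((φ l)^[r l * nn] i) - 1‖
        ≤ ‖f i‖ * ‖((T l) ^ (r l * nn)) x - η‖ := h1
      _ ≤ M * δ := mul_le_mul (hMF i hi) (horb l).le (norm_nonneg _) hM0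
  have hAhalf : ∀ l : Fin N, (1:ℝ)/2 ≤ ‖a l i * J x ((φ l)^[r l * nn] i)‖ := by
    intro l
    have h2 := hOrbF l
    have h3 := abs_norm_sub_norm_le (a l i * J x ((φ l)^[r l * nn] i)) (1:ℂ)
    rw [norm_one] at h3
    have h4 := abs_le.mp (h3.trans h2)
    linarith [hδ1]
  have hxFar : ∀ j, j ∉ F → ‖J x j‖ ≤ ‖f j‖ * δ := by
    intro j hj
    have h1 := hcd x η j
    rw [hJη, if_neg hj, sub_zero] at h1
    exact h1.trans (mul_le_mul_of_nonneg_left hxd.le (norm_nonneg _))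
  have hOrbFar : ∀ (l : Fin N) (j : I), j ∉ F →
      ‖a l j * J x ((φ l)^[r l * nn] j)‖ ≤ ‖f j‖ * δ := by
    intro l j hj
    have h1 := hcd (((T l) ^ (r l * nn)) x) η j
    rw [coord_pow J (b l) (φ l) (T l) (hT l) _ x j, hJη, if_neg hj, sub_zero] at h1
    exact h1.trans (mul_le_mul_of_nonneg_left (horb l).le (norm_nonneg _))
  have hfin : ∀ (q : ℝ) (j : I), q ≤ 2 * (‖f j‖ * δ) → q * ‖e j‖ < ε := by
    intro q j hq
    have h1 : q * ‖e j‖ ≤ 2 * (‖f j‖ * δ) * ‖e j‖ :=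
      mul_le_mul_of_nonneg_right hq (norm_nonneg _)
    have h2 : 2 * (‖f j‖ * δ) * ‖e j‖ = 2 * δ * (‖e j‖ * ‖f j‖) := by ring
    have h3 : 2 * δ * (‖e j‖ * ‖f j‖) ≤ 2 * δ * C :=
      mul_le_mul_of_nonneg_left (hCop j) (by positivity)
    linarith
  have hxNear : (1:ℝ)/2 ≤ ‖(1:ℂ) * J x i‖ := by
    rw [one_mul]
    have h1 := hcd x η i
    rw [hJη, if_pos hi] at h1
    have h2 : ‖J x i - 1‖ ≤ M * δ :=
      h1.trans (mul_le_mul (hMF i hi) hxd.le (norm_nonneg _) hM0)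
    have h3 := abs_norm_sub_norm_le (J x i) (1:ℂ)
    rw [norm_one] at h3
    have h4 := abs_le.mp (h3.trans h2)
    linarith [hδ1]
  refine ⟨fun l => ⟨?_, ?_⟩, fun s l hsl => ⟨?_, ?_⟩⟩
  · -- H1 first
    show ‖(a l i)⁻¹ • e ((φ l)^[r l * nn] i)‖ < ε
    set j := (φ l)^[r l * nn] i with hjdef
    have hjF : j ∉ F := fun hjF => hcond1 l i hi j hjF rfl
    rw [norm_smul]
    have hc := hcore (a l i) 1 (J x j) (‖f j‖ * δ) (hAhalf l)
      (by rw [one_mul]; exact hxFar j hjF)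
    rw [mul_one] at hc
    exact hfin _ j hc
  · -- H1 second
    by_cases h : ∃ c, (φ l)^[r l * nn] c = i
    · rw [backVec, dif_pos h]
      set j := Classical.choose h with hjdef
      have hjspec : (φ l)^[r l * nn] j = i := Classical.choose_spec h
      have hjF : j ∉ F := fun hjF => hcond1 l j hjF i hi hjspec
      rw [norm_smul]
      have hBt : ‖a l j * J x i‖ ≤ ‖f j‖ * δ := by
        have h1 := hOrbFar l j hjF; rwa [hjspec] at h1
      have hc := hcore 1 (a l j) (J x i) (‖f j‖ * δ) hxNear hBt
      rw [inv_one, one_mul] at hc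
      exact hfin _ j hc
    · rw [backVec, dif_neg h, norm_zero]; exact hε
  · -- H2 first (s < l)
    show ‖(a s i)⁻¹ • backVec (φ l) (b l) e (r l * nn) ((φ s)^[r s * nn] i)‖ < ε
    by_cases h : ∃ c, (φ l)^[r l * nn] c = (φ s)^[r s * nn] i
    · rw [backVec, dif_pos h]
      set j := Classical.choose h with hjdef
      have hjspec : (φ l)^[r l * nn] j = (φ s)^[r s * nn] i := Classical.choose_spec h
      have hjF : j ∉ F := fun hjF => hcond2 s l hsl i hi j hjF hjspec.symm
      rw [norm_smul, norm_smul, ← mul_assoc, ← norm_mul]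
      have hBt : ‖a l j * J x ((φ s)^[r s * nn] i)‖ ≤ ‖f j‖ * δ := by
        have h1 := hOrbFar l j hjF; rwa [hjspec] at h1
      exact hfin _ j (hcore _ _ _ _ (hAhalf s) hBt)
    · rw [backVec, dif_neg h, smul_zero, norm_zero]; exact hε
  · -- H2 second
    show ‖(a l i)⁻¹ • backVec (φ s) (b s) e (r s * nn) ((φ l)^[r l * nn] i)‖ < ε
    by_cases h : ∃ c, (φ s)^[r s * nn] c = (φ l)^[r l * nn] i
    · rw [backVec, dif_pos h]
      set j := Classical.choose h with hjdef
      have hjspec : (φ s)^[r s * nn] j = (φ l)^[r l * nn] i := Classical.choose_spec h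
      have hjF : j ∉ F := fun hjF => hcond2 s l hsl j hjF i hi hjspec
      rw [norm_smul, norm_smul, ← mul_assoc, ← norm_mul]
      have hBt : ‖a s j * J x ((φ l)^[r l * nn] i)‖ ≤ ‖f j‖ * δ := by
        have h1 := hOrbFar s j hjF; rwa [hjspec] at h1
      exact hfin _ j (hcore _ _ _ _ (hAhalf l) hBt)
    · rw [backVec, dif_neg h, smul_zero, norm_zero]; exact hε



end MainLemmas

section Suff
variable {X : Type*} [NormedAddCommGroup X] [NormedSpace ℂ X] [CompleteSpace X]
    [TopologicalSpace.SeparableSpace X]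
    {I : Type*} [Countable I] [Infinite I]

lemma suffice_dir
    (J : X →L[ℂ] (I → ℂ)) (hJ : Function.Injective J)
    (e : I → X) (he : ∀ i j : I, J (e i) j = if j = i then 1 else 0)
    (hdense : Dense (Submodule.span ℂ (Set.range e) : Set X))
    {N : ℕ}
    (r : Fin N → ℕ)
    (b : Fin N → I → ℂ) (hb : ∀ l i, b l i ≠ 0)
    (φ : Fin N → I → I) (hφ : ∀ l, Function.Injective (φ l))
    (T : Fin N → X →L[ℂ] X)
    (hT : ∀ (l : Fin N) (x : X) (i : I), J (T l x) i = b l i * J x (φ l i))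
    (nseq : ℕ → ℕ)
    (hcond : ∀ i : I,
          (∀ l : Fin N,
            Tendsto (fun k => ‖(∏ v ∈ Finset.range (r l * nseq k), b l ((φ l)^[v] i))⁻¹ •
                e ((φ l)^[r l * nseq k] i)‖) atTop (𝓝 0) ∧
            Tendsto (fun k => ‖backVec (φ l) (b l) e (r l * nseq k) i‖) atTop (𝓝 0)) ∧
          (∀ s l : Fin N, s < l →
            Tendsto (fun k => ‖(∏ v ∈ Finset.range (r s * nseq k), b s ((φ s)^[v] i))⁻¹ •
                backVec (φ l) (b l) e (r l * nseq k) ((φ s)^[r s * nseq k] i)‖) atTop (𝓝 0) ∧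
            Tendsto (fun k => ‖(∏ v ∈ Finset.range (r l * nseq k), b l ((φ l)^[v] i))⁻¹ •
                backVec (φ s) (b s) e (r s * nseq k) ((φ l)^[r l * nseq k] i)‖) atTop (𝓝 0))) :
    Dense {x : X | Dense (Set.range fun n : ℕ => fun l : Fin N => ((T l) ^ (r l * n)) x)} := by
  haveI : SecondCountableTopology X := UniformSpace.secondCountable_of_separable X
  obtain ⟨𝒱, h𝒱c, h𝒱ne, h𝒱b⟩ := TopologicalSpace.exists_countable_basis (Fin N → X)
  set orb : X → ℕ → (Fin N → X) := fun x nn => fun l => ((T l) ^ (r l * nn)) x with horb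
  set U : Set (Fin N → X) → Set X := fun V => {x | ∃ k, orb x (nseq k) ∈ V} with hU
  have hcont : ∀ nn : ℕ, Continuous (fun x => orb x nn) := by
    intro nn
    exact continuous_pi fun l => ((T l) ^ (r l * nn)).continuous
  have hUopen : ∀ V, IsOpen V → IsOpen (U V) := by
    intro V hV
    have : U V = ⋃ k : ℕ, (fun x => orb x (nseq k)) ⁻¹' V := by
      ext x; simp [hU, Set.mem_iUnion]
    rw [this]
    exact isOpen_iUnion fun k => (hV.preimage (hcont (nseq k)))
  have hUdense : ∀ V ∈ 𝒱, Dense (U V) := by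
    intro V hV
    have hVopen : IsOpen V := h𝒱b.isOpen hV
    have hVne : V.Nonempty := Set.nonempty_iff_ne_empty.mpr (fun h => h𝒱ne (h ▸ hV))
    rw [dense_iff_inter_open]
    intro W hW hWne
    -- pick u in W from the span
    obtain ⟨u, huspan, huW⟩ := hdense.exists_mem_open hW hWne
    -- pick y in V with all components in the span
    have hpidense : Dense (Set.univ.pi fun _ : Fin N =>
        (Submodule.span ℂ (Set.range e) : Set X)) := dense_pi Set.univ fun _ _ => hdense
    obtain ⟨y, hyspan, hyV⟩ := hpidense.exists_mem_open hVopen hVne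
    -- coefficients
    obtain ⟨cu, hcu⟩ := Finsupp.mem_span_range_iff_exists_finsupp.mp huspan
    have hcu' : ∑ i ∈ cu.support, cu i • e i = u := hcu
    have hd0 : ∀ l : Fin N, y l ∈ Submodule.span ℂ (Set.range e) :=
      fun l => hyspan l (Set.mem_univ l)
    choose d hd using fun l => Finsupp.mem_span_range_iff_exists_finsupp.mp (hd0 l)
    have hd' : ∀ l, ∑ i ∈ (d l).support, d l i • e i = y l := hd
    set m : Fin N → ℕ → ℕ := fun s k => r s * nseq k with hm
    set a : Fin N → ℕ → I → ℂ :=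
      fun s k i => ∏ v ∈ Finset.range (m s k), b s ((φ s)^[v] i) with ha
    set z : ℕ → X := fun k => u + ∑ s : Fin N, ∑ i ∈ (d s).support,
      d s i • ((a s k i)⁻¹ • e ((φ s)^[m s k] i)) with hz
    -- z k → u
    have hz1 : Tendsto z atTop (𝓝 u) := by
      have h0 : Tendsto (fun k => ∑ s : Fin N, ∑ i ∈ (d s).support,
          d s i • ((a s k i)⁻¹ • e ((φ s)^[m s k] i))) atTop (𝓝 0) := by
        have : (0 : X) = ∑ s : Fin N, ∑ i ∈ (d s).support, (0 : X) := by simp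
        rw [this]
        refine tendsto_finset_sum _ fun s _ => tendsto_finset_sum _ fun i _ => ?_
        have h1 := ((hcond i).1 s).1
        have h2 : Tendsto (fun k => (a s k i)⁻¹ • e ((φ s)^[m s k] i)) atTop (𝓝 0) :=
          tendsto_zero_iff_norm_tendsto_zero.mpr h1
        simpa using h2.const_smul (d s i)
      simpa using tendsto_const_nhds.add h0
    -- T l ^ (m l k) (z k) → y l
    have hz2 : ∀ l : Fin N, Tendsto (fun k => ((T l) ^ (m l k)) (z k)) atTop (𝓝 (y l)) := by
      intro l
      have key : ∀ k, ((T l) ^ (m l k)) (z k) =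
          y l + ((∑ i ∈ cu.support, cu i • backVec (φ l) (b l) e (m l k) i) +
          ∑ s ∈ Finset.univ.erase l, ∑ i ∈ (d s).support,
            d s i • ((a s k i)⁻¹ • backVec (φ l) (b l) e (m l k) ((φ s)^[m s k] i))) := by
        intro k
        rw [hz]
        simp only [map_add, map_sum]
        have hTu : ((T l) ^ (m l k)) u = ∑ i ∈ cu.support, cu i • backVec (φ l) (b l) e (m l k) i := by
          rw [← hcu']
          rw [map_sum]
          refine Finset.sum_congr rfl fun i _ => ?_
          rw [map_smul, pow_e J (b l) (φ l) (T l) hJ (hφ l) (hT l) e he]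
        have hsplit : ∑ s : Fin N, ∑ i ∈ (d s).support,
            ((T l) ^ (m l k)) (d s i • ((a s k i)⁻¹ • e ((φ s)^[m s k] i))) =
            (∑ i ∈ (d l).support, ((T l) ^ (m l k)) (d l i • ((a l k i)⁻¹ • e ((φ l)^[m l k] i)))) +
            ∑ s ∈ Finset.univ.erase l, ∑ i ∈ (d s).support,
              ((T l) ^ (m l k)) (d s i • ((a s k i)⁻¹ • e ((φ s)^[m s k] i))) := by
          rw [← Finset.add_sum_erase _ _ (Finset.mem_univ l)]
        have hdiag : ∀ i, ((T l) ^ (m l k)) (d l i • ((a l k i)⁻¹ • e ((φ l)^[m l k] i))) =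
            d l i • e i := by
          intro i
          rw [map_smul, pow_inv_e J (b l) (φ l) (T l) hJ (hφ l) (hb l) (hT l) e he]
        have hcross : ∀ s i, ((T l) ^ (m l k)) (d s i • ((a s k i)⁻¹ • e ((φ s)^[m s k] i))) =
            d s i • ((a s k i)⁻¹ • backVec (φ l) (b l) e (m l k) ((φ s)^[m s k] i)) := by
          intro s i
          rw [map_smul, map_smul, pow_e J (b l) (φ l) (T l) hJ (hφ l) (hT l) e he]
        calc ((T l) ^ (m l k)) u + ∑ s : Fin N, ∑ i ∈ (d s).support,
              ((T l) ^ (m l k)) (d s i • ((a s k i)⁻¹ • e ((φ s)^[m s k] i)))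
            = (∑ i ∈ cu.support, cu i • backVec (φ l) (b l) e (m l k) i) +
              ((∑ i ∈ (d l).support, d l i • e i) +
              ∑ s ∈ Finset.univ.erase l, ∑ i ∈ (d s).support,
                d s i • ((a s k i)⁻¹ • backVec (φ l) (b l) e (m l k) ((φ s)^[m s k] i))) := by
              rw [hTu, hsplit]
              congr 1
              congr 1
              · exact Finset.sum_congr rfl fun i _ => hdiag i
              · exact Finset.sum_congr rfl fun s _ => Finset.sum_congr rfl fun i _ => hcross s i
          _ = _ := by rw [hd']; abel
      have h1 : Tendsto (fun k => ∑ i ∈ cu.support, cu i • backVec (φ l) (b l) e (m l k) i)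
          atTop (𝓝 0) := by
        have : (0 : X) = ∑ i ∈ cu.support, (0 : X) := by simp
        rw [this]
        refine tendsto_finset_sum _ fun i _ => ?_
        have := tendsto_zero_iff_norm_tendsto_zero.mpr ((hcond i).1 l).2
        simpa using this.const_smul (cu i)
      have h2 : Tendsto (fun k => ∑ s ∈ Finset.univ.erase l, ∑ i ∈ (d s).support,
          d s i • ((a s k i)⁻¹ • backVec (φ l) (b l) e (m l k) ((φ s)^[m s k] i)))
          atTop (𝓝 0) := by
        have : (0 : X) = ∑ s ∈ Finset.univ.erase l, ∑ i ∈ (d s).support, (0 : X) := by simp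
        rw [this]
        refine tendsto_finset_sum _ fun s hs => tendsto_finset_sum _ fun i _ => ?_
        have hsl : s ≠ l := Finset.ne_of_mem_erase hs
        have hv : Tendsto (fun k => (a s k i)⁻¹ •
            backVec (φ l) (b l) e (m l k) ((φ s)^[m s k] i)) atTop (𝓝 0) := by
          rcases lt_or_gt_of_ne hsl with h | h
          · exact tendsto_zero_iff_norm_tendsto_zero.mpr (((hcond i).2 s l h).1)
          · exact tendsto_zero_iff_norm_tendsto_zero.mpr (((hcond i).2 l s h).2)
        simpa using hv.const_smul (d s i)
      simp only [key]
      simpa using tendsto_const_nhds.add (h1.add h2)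
    -- conclude
    have htuple : Tendsto (fun k => orb (z k) (nseq k)) atTop (𝓝 y) := by
      rw [tendsto_pi_nhds]
      intro l
      exact hz2 l
    have hev1 : ∀ᶠ k in atTop, z k ∈ W := hz1.eventually_mem (hW.mem_nhds huW)
    have hev2 : ∀ᶠ k in atTop, orb (z k) (nseq k) ∈ V := htuple.eventually_mem (hVopen.mem_nhds hyV)
    obtain ⟨k, hk1, hk2⟩ := (hev1.and hev2).exists
    exact ⟨z k, hk1, ⟨k, hk2⟩⟩
  -- Baire
  have hBaire : Dense (⋂₀ (U '' 𝒱)) := by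
    refine dense_sInter_of_isOpen ?_ (h𝒱c.image U) ?_
    · rintro s ⟨V, hV, rfl⟩; exact hUopen V (h𝒱b.isOpen hV)
    · rintro s ⟨V, hV, rfl⟩; exact hUdense V hV
  refine hBaire.mono ?_
  intro x hx
  rw [Set.sInter_image] at hx
  simp only [Set.mem_setOf_eq]
  rw [h𝒱b.dense_iff]
  intro V hV hVne
  have hxV : x ∈ U V := by
    have := Set.mem_iInter.mp hx V
    exact Set.mem_iInter.mp this hV
  obtain ⟨k, hk⟩ := hxV
  exact ⟨orb x (nseq k), hk, ⟨nseq k, rfl⟩⟩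



end Suff

theorem stmt1
    {X : Type*} [NormedAddCommGroup X] [NormedSpace ℂ X] [CompleteSpace X]
    [TopologicalSpace.SeparableSpace X] (hinfdim : ¬ FiniteDimensional ℂ X)
    {I : Type*} [Countable I] [Infinite I]
    (J : X →L[ℂ] (I → ℂ)) (hJ : Function.Injective J)
    (e : I → X) (he : ∀ i j : I, J (e i) j = if j = i then 1 else 0)
    (f : I → X →L[ℂ] ℂ) (hf : ∀ (i : I) (x : X), f i x = J x i)
    (hdense : Dense (Submodule.span ℂ (Set.range e) : Set X))
    (hOP : ∃ C : ℝ, ∀ i : I, ‖e i‖ * ‖f i‖ ≤ C)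
    {N : ℕ} (hN : 2 ≤ N)
    (r : Fin N → ℕ) (hr1 : ∀ l, 1 ≤ r l) (hr : StrictMono r)
    (b : Fin N → I → ℂ) (hb : ∀ l i, b l i ≠ 0)
    (φ : Fin N → I → I) (hφ : ∀ l, Function.Injective (φ l))
    (T : Fin N → X →L[ℂ] X)
    (hT : ∀ (l : Fin N) (x : X) (i : I), J (T l x) i = b l i * J x (φ l i))
    (hrun : ∀ s l : Fin N, s < l → RunAwayWith ((φ s)^[r s]) ((φ l)^[r l])) :
    Dense {x : X | Dense (Set.range fun n : ℕ => fun l : Fin N => ((T l) ^ (r l * n)) x)}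
      ↔
    ((∀ l : Fin N, ∀ i : I, ∀ M : ℕ, 1 ≤ M → (φ l)^[M] i ≠ i) ∧
      ∃ n : ℕ → ℕ, StrictMono n ∧ (∀ k, 1 ≤ n k) ∧
        ∀ i : I,
          (∀ l : Fin N,
            Tendsto (fun k => ‖(∏ v ∈ Finset.range (r l * n k), b l ((φ l)^[v] i))⁻¹ •
                e ((φ l)^[r l * n k] i)‖) atTop (𝓝 0) ∧
            Tendsto (fun k => ‖backVec (φ l) (b l) e (r l * n k) i‖) atTop (𝓝 0)) ∧
          (∀ s l : Fin N, s < l →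
            Tendsto (fun k => ‖(∏ v ∈ Finset.range (r s * n k), b s ((φ s)^[v] i))⁻¹ •
                backVec (φ l) (b l) e (r l * n k) ((φ s)^[r s * n k] i)‖) atTop (𝓝 0) ∧
            Tendsto (fun k => ‖(∏ v ∈ Finset.range (r l * n k), b l ((φ l)^[v] i))⁻¹ •
                backVec (φ s) (b s) e (r s * n k) ((φ l)^[r l * n k] i)‖) atTop (𝓝 0))) := by
  obtain ⟨C₀, hC₀⟩ := hOP
  set C : ℝ := max C₀ 1 with hCdef
  have hC1 : (1:ℝ) ≤ C := le_max_right _ _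
  have hCop : ∀ i, ‖e i‖ * ‖f i‖ ≤ C := fun i => (hC₀ i).trans (le_max_left _ _)
  have hnt : Nontrivial X := by
    by_contra h
    rw [not_nontrivial_iff_subsingleton] at h
    exact hinfdim (by haveI := h; infer_instance)
  constructor
  · intro hDense
    have hper : ∀ l : Fin N, ∀ i : I, ∀ M : ℕ, 1 ≤ M → (φ l)^[M] i ≠ i :=
      fun l i M hM => no_periodic J e he r b φ T hT hDense l i M hM
    refine ⟨hper, ?_⟩
    obtain ⟨u, husurj⟩ := exists_surjective_nat I
    set Fk : ℕ → Finset I := fun k => (Finset.range (k+1)).image u with hFkdef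
    have hstep := fun (k n0 : ℕ) =>
      exists_good hnt J e he f hf C hC1 hCop hN r hr1 b hb φ T hT hrun hDense hper
        (Fk k) (1/((k:ℝ)+1)) (by positivity) n0
    choose pick hp1 hp2 hp3 using hstep
    set nseq : ℕ → ℕ :=
      fun k => Nat.rec (motive := fun _ => ℕ) (pick 0 0) (fun k ih => pick (k+1) (ih+1)) k
      with hnseqdef
    have hnsS : ∀ k, nseq (k+1) = pick (k+1) (nseq k + 1) := fun k => rfl
    have hmono : StrictMono nseq := by
      apply strictMono_nat_of_lt_succ
      intro k
      have h1 := hp1 (k+1) (nseq k + 1)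
      rw [hnsS k]
      omega
    have h1le : ∀ k, 1 ≤ nseq k := by
      intro k
      cases k with
      | zero => exact hp2 0 0
      | succ k => rw [hnsS k]; exact hp2 (k+1) (nseq k + 1)
    refine ⟨nseq, hmono, h1le, ?_⟩
    intro i
    obtain ⟨mi, hmi⟩ := husurj i
    have hiF : ∀ k, mi ≤ k → i ∈ Fk k := fun k hk =>
      Finset.mem_image.mpr ⟨mi, Finset.mem_range.mpr (by omega), hmi⟩
    have hgood : ∀ k, ∀ i' ∈ Fk k,
        (∀ l : Fin N,
          ‖(∏ v ∈ Finset.range (r l * nseq k), b l ((φ l)^[v] i'))⁻¹ •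
              e ((φ l)^[r l * nseq k] i')‖ < 1/((k:ℝ)+1) ∧
          ‖backVec (φ l) (b l) e (r l * nseq k) i'‖ < 1/((k:ℝ)+1)) ∧
        (∀ s l : Fin N, s < l →
          ‖(∏ v ∈ Finset.range (r s * nseq k), b s ((φ s)^[v] i'))⁻¹ •
              backVec (φ l) (b l) e (r l * nseq k) ((φ s)^[r s * nseq k] i')‖ < 1/((k:ℝ)+1) ∧
          ‖(∏ v ∈ Finset.range (r l * nseq k), b l ((φ l)^[v] i'))⁻¹ •
              backVec (φ s) (b s) e (r s * nseq k) ((φ l)^[r l * nseq k] i')‖ < 1/((k:ℝ)+1)) := by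
      intro k
      cases k with
      | zero => exact hp3 0 0
      | succ k => exact hp3 (k+1) (nseq k + 1)
    refine ⟨fun l => ⟨?_, ?_⟩, fun s l hsl => ⟨?_, ?_⟩⟩
    · refine squeeze_zero' (Filter.Eventually.of_forall fun k => norm_nonneg _) ?_
        tendsto_one_div_add_atTop_nhds_zero_nat
      exact eventually_atTop.mpr
        ⟨mi, fun k hk => (((hgood k i (hiF k hk)).1 l).1).le⟩
    · refine squeeze_zero' (Filter.Eventually.of_forall fun k => norm_nonneg _) ?_
        tendsto_one_div_add_atTop_nhds_zero_nat
      exact eventually_atTop.mpr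
        ⟨mi, fun k hk => (((hgood k i (hiF k hk)).1 l).2).le⟩
    · refine squeeze_zero' (Filter.Eventually.of_forall fun k => norm_nonneg _) ?_
        tendsto_one_div_add_atTop_nhds_zero_nat
      exact eventually_atTop.mpr
        ⟨mi, fun k hk => (((hgood k i (hiF k hk)).2 s l hsl).1).le⟩
    · refine squeeze_zero' (Filter.Eventually.of_forall fun k => norm_nonneg _) ?_
        tendsto_one_div_add_atTop_nhds_zero_nat
      exact eventually_atTop.mpr
        ⟨mi, fun k hk => (((hgood k i (hiF k hk)).2 s l hsl).2).le⟩
  · rintro ⟨hper, nseq, hmono, hn1, hcond⟩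
    exact suffice_dir J hJ e he hdense r b hb φ hφ T hT nseq hcond
end

section
/- Let X be a Banach sequence space over a countably infinite index set I in which the canonical unit vectors (e_i)_{i∈I} form an OP-basis, let integers 1 ≤ r₁ < r₂ < ⋯ < r_N (N ≥ 2) be given, and for each 1 ≤ l ≤ N let T_l = T_{b^{(l)},φ_l} : X → X be a weighted pseudo-shift with weight sequence b^{(l)} = (b_i^{(l)})_{i∈I} of nonzero scalars and injective map φ_l : I → I. Suppose there exists a strictly increasing sequence (n_k)_{k≥1} of positive integers such that: (H1) for all i, j ∈ I and all 1 ≤ l, s ≤ N, ‖(∏_{v=0}^{r_l n_k−1} b^{(l)}_{φ_l^v(i)})^{−1} e_{φ_l^{r_l n_k}(i)}‖ · ‖(∏_{v=1}^{r_s n_k} b^{(s)}_{ψ_s^v(j)}) e_{ψ_s^{r_s n_k}(j)}‖ → 0 as k → ∞; and (H2) for every i ∈ I and all 1 ≤ s < l ≤ N, ‖(∏_{v=0}^{r_s n_k−1} b^{(s)}_{φ_s^v(i)})^{−1} (∏_{v=1}^{r_l n_k} b^{(l)}_{ψ_l^v(φ_s^{r_s n_k}(i))}) e_{ψ_l^{r_l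 n_k}(φ_s^{r_s n_k}(i))}‖ → 0 and ‖(∏_{v=0}^{r_l n_k−1} b^{(l)}_{φ_l^v(i)})^{−1} (∏_{v=1}^{r_s n_k} b^{(s)}_{ψ_s^v(φ_l^{r_l n_k}(i))}) e_{ψ_s^{r_s n_k}(φ_l^{r_l n_k}(i))}‖ → 0 as k → ∞. Then T₁^{r₁}, T₂^{r₂}, …, T_N^{r_N} satisfy the d-Supercyclicity Criterion (with respect to (n_k)). -/
/-!
On the dense subspace `span {e_i}` take `S_{l,k}` to be the linear map sending `e_i` to
`(∏_{v<r_l n_k} b^{(l)}_{φ_l^v(i)})⁻¹ e_{φ_l^{r_l n_k}(i)}`, a preimage of `e_i` under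
`T_l^{r_l n_k}`; on unit vectors `T_l^m` acts by `e_j ↦ (∏_{v=1}^m b_{ψ_l^v(j)}) e_{ψ_l^m(j)}`.
Hence `T_l^{r_l n_k} S_{l,k} = id` there, `T_l^{r_l n_k} S_{s,k} e_i` (for `s ≠ l`) is exactly a
vector of (H2), and `‖T_l^{r_l n_k} e_i‖ ‖S_{j,k} e_p‖` is a product of (H1). Since elements of
the span are finite combinations of unit vectors, both conditions of the criterion follow
termwise.
-/

open Filter Topology
open scoped Classical

/-- Continuous linear operators `T 0, …, T (N-1)` on `X` satisfy the d-Supercyclicity Criterion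
with respect to the strictly increasing sequence `(n k)` of positive integers. -/
def DSupCriterionWrt {X : Type*} [NormedAddCommGroup X] [NormedSpace ℂ X]
    {N : ℕ} (T : Fin N → X →L[ℂ] X) (n : ℕ → ℕ) : Prop :=
  ∃ (X₀ : Set X) (Xs : Fin N → Set X) (S : Fin N → ℕ → X → X),
    Dense X₀ ∧ (∀ l, Dense (Xs l)) ∧
    (∀ l i : Fin N, ∀ x ∈ Xs i,
      Tendsto (fun k => ((T l) ^ (n k)) (S i k x) - (if i = l then x else 0)) atTop (𝓝 0)) ∧
    (∀ l : Fin N, ∀ x ∈ X₀, ∀ y : Fin N → X, (∀ j, y j ∈ Xs j) →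
      Tendsto (fun k => ‖((T l) ^ (n k)) x‖ * ‖∑ j : Fin N, S j k (y j)‖) atTop (𝓝 0))

open Finset Function

section LinearCombination

variable {ι κ α 𝕜 E F : Type*}

theorem exists_linearCombination_eq_of_mem_span {R M : Type*} [Semiring R] [AddCommMonoid M]
    [Module R M] (v : ι → M) (x : M) :
    ∃ c : ι →₀ R, x ∈ Submodule.span R (Set.range v) → Finsupp.linearCombination R v c = x := by
  by_cases hx : x ∈ Submodule.span R (Set.range v)
  · rw [← Finsupp.range_linearCombination] at hx
    obtain ⟨c, hc⟩ := hx
    exact ⟨c, fun _ => hc⟩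
  · exact ⟨0, fun h => absurd h hx⟩

theorem tendsto_linearCombination_zero {R M : Type*} [Semiring R] [TopologicalSpace M]
    [AddCommMonoid M] [Module R M] [ContinuousConstSMul R M] [ContinuousAdd M]
    {l : Filter α} {u : α → ι → M} (c : ι →₀ R) (hu : ∀ i, Tendsto (fun a => u a i) l (𝓝 0)) :
    Tendsto (fun a => Finsupp.linearCombination R (u a) c) l (𝓝 0) := by
  simp only [Finsupp.linearCombination_apply, Finsupp.sum]
  simpa using tendsto_finsetSum c.support fun i _ => (hu i).const_smul (c i)

theorem ContinuousLinearMap.apply_linearCombination {R M M' : Type*} [Semiring R]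
    [TopologicalSpace M] [AddCommMonoid M] [Module R M] [TopologicalSpace M'] [AddCommMonoid M']
    [Module R M'] (A : M →L[R] M') (v : ι → M) (c : ι →₀ R) :
    A (Finsupp.linearCombination R v c) = Finsupp.linearCombination R (A ∘ v) c :=
  Finsupp.apply_linearCombination R A.toLinearMap v c

variable [NormedField 𝕜] [SeminormedAddCommGroup E] [NormedSpace 𝕜 E]
  [SeminormedAddCommGroup F] [NormedSpace 𝕜 F]

theorem norm_linearCombination_le (v : ι → E) (c : ι →₀ 𝕜) :
    ‖Finsupp.linearCombination 𝕜 v c‖ ≤ ∑ i ∈ c.support, ‖c i‖ * ‖v i‖ := by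
  rw [Finsupp.linearCombination_apply, Finsupp.sum]
  exact (norm_sum_le _ _).trans (sum_le_sum fun i _ => (norm_smul _ _).le)

theorem tendsto_norm_linearCombination_mul_norm_linearCombination {l : Filter α}
    {u : α → ι → E} {w : α → κ → F} (c : ι →₀ 𝕜) (d : κ →₀ 𝕜)
    (h : ∀ i j, Tendsto (fun a => ‖u a i‖ * ‖w a j‖) l (𝓝 0)) :
    Tendsto (fun a => ‖Finsupp.linearCombination 𝕜 (u a) c‖ *
      ‖Finsupp.linearCombination 𝕜 (w a) d‖) l (𝓝 0) := by
  have hbound : ∀ a, ‖Finsupp.linearCombination 𝕜 (u a) c‖ *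
      ‖Finsupp.linearCombination 𝕜 (w a) d‖ ≤
        ∑ i ∈ c.support, ∑ j ∈ d.support, ‖c i‖ * ‖d j‖ * (‖u a i‖ * ‖w a j‖) := by
    intro a
    calc _ ≤ (∑ i ∈ c.support, ‖c i‖ * ‖u a i‖) * ∑ j ∈ d.support, ‖d j‖ * ‖w a j‖ :=
          mul_le_mul (norm_linearCombination_le _ _) (norm_linearCombination_le _ _)
            (norm_nonneg _) (sum_nonneg fun _ _ => by positivity)
      _ = _ := by
          rw [sum_mul_sum]
          exact sum_congr rfl fun _ _ => sum_congr rfl fun _ _ => by ring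
  refine squeeze_zero (fun _ => by positivity) hbound ?_
  simpa using tendsto_finsetSum c.support fun i _ =>
    tendsto_finsetSum d.support fun j _ => (h i j).const_mul (‖c i‖ * ‖d j‖)

theorem tendsto_norm_mul_norm_sum_zero {l : Filter α} {s : Finset κ} {x : α → E}
    {y : κ → α → F} (h : ∀ j ∈ s, Tendsto (fun a => ‖x a‖ * ‖y j a‖) l (𝓝 0)) :
    Tendsto (fun a => ‖x a‖ * ‖∑ j ∈ s, y j a‖) l (𝓝 0) := by
  refine squeeze_zero (fun _ => by positivity)
    (fun a => (mul_le_mul_of_nonneg_left (norm_sum_le _ _) (norm_nonneg _)).trans_eq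
      (mul_sum _ _ _)) ?_
  simpa using tendsto_finsetSum s h

end LinearCombination

section PseudoShift

noncomputable def fwdVec {I X : Type*} [AddCommGroup X] [Module ℂ X]
    (φ : I → I) (b : I → ℂ) (e : I → X) (m : ℕ) (i : I) : X :=
  (∏ v ∈ range m, b (φ^[v] i))⁻¹ • e (φ^[m] i)

variable {X I : Type*} [NormedAddCommGroup X] [NormedSpace ℂ X]
  {J : X →L[ℂ] (I → ℂ)} {e : I → X} {b : I → ℂ} {φ : I → I} {T : X →L[ℂ] X}

theorem pseudoShift_pow_apply_coord (hT : ∀ x i, J (T x) i = b i * J x (φ i))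
    (m : ℕ) (x : X) (i : I) :
    J ((T ^ m) x) i = (∏ v ∈ range m, b (φ^[v] i)) * J x (φ^[m] i) := by
  induction m generalizing x with
  | zero => simp
  | succ m ih =>
    rw [pow_succ, mul_apply_eq_comp, ih, hT, prod_range_succ, iterate_succ_apply']
    ring

theorem backVec_iterate (hφ : Injective φ) (m : ℕ) (i : I) :
    backVec φ b e m (φ^[m] i) = (∏ v ∈ range m, b (φ^[v] i)) • e i := by
  have h : ∃ j, φ^[m] j = φ^[m] i := ⟨i, rfl⟩
  rw [backVec, dif_pos h, (hφ.iterate m) (Classical.choose_spec h)]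

theorem pseudoShift_pow_apply_basis (hJ : Injective J)
    (he : ∀ i j, J (e i) j = if j = i then 1 else 0) (hφ : Injective φ)
    (hT : ∀ x i, J (T x) i = b i * J x (φ i)) (m : ℕ) (j : I) :
    (T ^ m) (e j) = backVec φ b e m j := by
  refine hJ (funext fun q => ?_)
  rw [pseudoShift_pow_apply_coord hT, he]
  by_cases hj : ∃ p, φ^[m] p = j
  · obtain ⟨p, rfl⟩ := hj
    rw [backVec_iterate hφ, map_smul, Pi.smul_apply, he, (hφ.iterate m).eq_iff]
    split_ifs <;> simp_all
  · rw [backVec, dif_neg hj, if_neg fun h => hj ⟨q, h⟩]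
    simp

theorem pseudoShift_pow_apply_fwdVec (hJ : Injective J)
    (he : ∀ i j, J (e i) j = if j = i then 1 else 0) (hb : ∀ i, b i ≠ 0) (hφ : Injective φ)
    (hT : ∀ x i, J (T x) i = b i * J x (φ i)) (m : ℕ) (j : I) :
    (T ^ m) (fwdVec φ b e m j) = e j := by
  rw [fwdVec, map_smul, pseudoShift_pow_apply_basis hJ he hφ hT, backVec_iterate hφ, smul_smul,
    inv_mul_cancel₀ (prod_ne_zero_iff.mpr fun v _ => hb _), one_smul]

end PseudoShift

theorem stmt4_general
    {X : Type*} [NormedAddCommGroup X] [NormedSpace ℂ X]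
    {I : Type*}
    (J : X →L[ℂ] (I → ℂ)) (hJ : Function.Injective J)
    (e : I → X) (he : ∀ i j : I, J (e i) j = if j = i then 1 else 0)
    (hdense : Dense (Submodule.span ℂ (Set.range e) : Set X))
    {N : ℕ}
    (r : Fin N → ℕ)
    (b : Fin N → I → ℂ) (hb : ∀ l i, b l i ≠ 0)
    (φ : Fin N → I → I) (hφ : ∀ l, Function.Injective (φ l))
    (T : Fin N → X →L[ℂ] X)
    (hT : ∀ (l : Fin N) (x : X) (i : I), J (T l x) i = b l i * J x (φ l i))
    (n : ℕ → ℕ)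
    (hH1 : ∀ i j : I, ∀ l s : Fin N,
      Tendsto (fun k => ‖(∏ v ∈ Finset.range (r l * n k), b l ((φ l)^[v] i))⁻¹ •
            e ((φ l)^[r l * n k] i)‖ *
          ‖backVec (φ s) (b s) e (r s * n k) j‖) atTop (𝓝 0))
    (hH2 : ∀ i : I, ∀ s l : Fin N, s < l →
      Tendsto (fun k => ‖(∏ v ∈ Finset.range (r s * n k), b s ((φ s)^[v] i))⁻¹ •
          backVec (φ l) (b l) e (r l * n k) ((φ s)^[r s * n k] i)‖) atTop (𝓝 0) ∧
      Tendsto (fun k => ‖(∏ v ∈ Finset.range (r l * n k), b l ((φ l)^[v] i))⁻¹ •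
          backVec (φ s) (b s) e (r s * n k) ((φ l)^[r l * n k] i)‖) atTop (𝓝 0)) :
    DSupCriterionWrt (fun l : Fin N => (T l) ^ (r l)) n := by
  choose coeff hcoeff using exists_linearCombination_eq_of_mem_span (R := ℂ) e
  have hbasis l := pseudoShift_pow_apply_basis hJ he (hφ l) (hT l)
  refine ⟨_, fun _ => _, fun l k x => Finsupp.linearCombination ℂ
      (fwdVec (φ l) (b l) e (r l * n k)) (coeff x), hdense, fun _ => hdense, ?_, ?_⟩
  · intro l i x hx
    simp only [← pow_mul, ContinuousLinearMap.apply_linearCombination]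
    rcases eq_or_ne i l with rfl | hil
    · have hinv k : ⇑(T i ^ (r i * n k)) ∘ fwdVec (φ i) (b i) e (r i * n k) = e :=
        funext (pseudoShift_pow_apply_fwdVec hJ he (hb i) (hφ i) (hT i) _)
      simp only [hinv, hcoeff x hx, if_true, sub_self, tendsto_const_nhds]
    · simp only [if_neg hil, sub_zero]
      refine tendsto_linearCombination_zero _ fun p => ?_
      simp only [comp_apply, fwdVec, map_smul, hbasis]
      refine tendsto_zero_iff_norm_tendsto_zero.mpr ?_
      rcases hil.lt_or_gt with h | h
      exacts [(hH2 p i l h).1, (hH2 p l i h).2]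
  · intro l x hx y _
    refine tendsto_norm_mul_norm_sum_zero fun j _ => ?_
    rw [← hcoeff x hx]
    simp only [← pow_mul, ContinuousLinearMap.apply_linearCombination]
    refine tendsto_norm_linearCombination_mul_norm_linearCombination _ _ fun i p => ?_
    simpa only [comp_apply, hbasis, fwdVec, mul_comm] using hH1 p i j l

theorem stmt4
    {X : Type*} [NormedAddCommGroup X] [NormedSpace ℂ X] [CompleteSpace X]
    [TopologicalSpace.SeparableSpace X] (hinfdim : ¬ FiniteDimensional ℂ X)
    {I : Type*} [Countable I] [Infinite I]
    (J : X →L[ℂ] (I → ℂ)) (hJ : Function.Injective J)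
    (e : I → X) (he : ∀ i j : I, J (e i) j = if j = i then 1 else 0)
    (f : I → X →L[ℂ] ℂ) (hf : ∀ (i : I) (x : X), f i x = J x i)
    (hdense : Dense (Submodule.span ℂ (Set.range e) : Set X))
    (hOP : ∃ C : ℝ, ∀ i : I, ‖e i‖ * ‖f i‖ ≤ C)
    {N : ℕ} (hN : 2 ≤ N)
    (r : Fin N → ℕ) (hr1 : ∀ l, 1 ≤ r l) (hr : StrictMono r)
    (b : Fin N → I → ℂ) (hb : ∀ l i, b l i ≠ 0)
    (φ : Fin N → I → I) (hφ : ∀ l, Function.Injective (φ l))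
    (T : Fin N → X →L[ℂ] X)
    (hT : ∀ (l : Fin N) (x : X) (i : I), J (T l x) i = b l i * J x (φ l i))
    (n : ℕ → ℕ) (hn : StrictMono n) (hn1 : ∀ k, 1 ≤ n k)
    (hH1 : ∀ i j : I, ∀ l s : Fin N,
      Tendsto (fun k => ‖(∏ v ∈ Finset.range (r l * n k), b l ((φ l)^[v] i))⁻¹ •
            e ((φ l)^[r l * n k] i)‖ *
          ‖backVec (φ s) (b s) e (r s * n k) j‖) atTop (𝓝 0))
    (hH2 : ∀ i : I, ∀ s l : Fin N, s < l →
      Tendsto (fun k => ‖(∏ v ∈ Finset.range (r s * n k), b s ((φ s)^[v] i))⁻¹ •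
          backVec (φ l) (b l) e (r l * n k) ((φ s)^[r s * n k] i)‖) atTop (𝓝 0) ∧
      Tendsto (fun k => ‖(∏ v ∈ Finset.range (r l * n k), b l ((φ l)^[v] i))⁻¹ •
          backVec (φ s) (b s) e (r s * n k) ((φ l)^[r l * n k] i)‖) atTop (𝓝 0)) :
    DSupCriterionWrt (fun l : Fin N => (T l) ^ (r l)) n :=
  stmt4_general J hJ e he hdense r b hb φ hφ T hT n hH1 hH2
end
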